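/- The screw-parameter extraction is a left inverse of the construction: starting from screw parameters (θ, d, l, m) with 0 < θ < 2π, ‖l‖ = 1, l·m = 0, building the dual quaternion via w_r = cos(θ/2), v_r = l sin(θ/2), w_d = −(d/2)sin(θ/2), v_d = sin(θ/2)m + (d/2)cos(θ/2)l, and then computing θ′ = 2 arccos(w_r), d′ = −2 w_d / ‖v_r‖, l′ = v_r / ‖v_r‖, m′ = (v_d − l′ (d′ w_r / 2)) / ‖v_r‖ recovers (θ, d, l, m). -/

import Mathlib

open Real

lemma two_mul_arccos_cos_half {θ : ℝ} (h0 : 0 ≤ θ) (h2 : θ ≤ 2 * π) :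
    2 * arccos (cos (θ / 2)) = θ := by
  rw [arccos_cos (by linarith) (by linarith)]
  ring

theorem screw_roundtrip_general (θ d : ℝ) (l m : EuclideanSpace ℝ (Fin 3))
    (h0 : 0 < θ) (h2 : θ < 2 * π) (hl : ‖l‖ = 1) :
    let wr : ℝ := Real.cos (θ / 2)
    let vr : EuclideanSpace ℝ (Fin 3) := Real.sin (θ / 2) • l
    let wd : ℝ := -(d / 2) * Real.sin (θ / 2)
    let vd : EuclideanSpace ℝ (Fin 3) :=
      Real.sin (θ / 2) • m + ((d / 2) * Real.cos (θ / 2)) • l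
    let θ' : ℝ := 2 * Real.arccos wr
    let d' : ℝ := -2 * wd / ‖vr‖
    let l' : EuclideanSpace ℝ (Fin 3) := ‖vr‖⁻¹ • vr
    let m' : EuclideanSpace ℝ (Fin 3) := ‖vr‖⁻¹ • (vd - (d' * wr / 2) • l')
    θ' = θ ∧ d' = d ∧ l' = l ∧ m' = m := by
  intro wr vr wd vd θ' d' l' m'
  have hs : 0 < sin (θ / 2) := sin_pos_of_pos_of_lt_pi (by linarith) (by linarith)
  have hvr : ‖vr‖ = sin (θ / 2) := by rw [norm_smul_of_nonneg hs.le, hl, mul_one]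
  have hd' : d' = d := by
    simp only [d', wd, hvr]
    field_simp
  have hl' : l' = l := by
    simp only [l', vr, hvr]
    exact inv_smul_smul₀ hs.ne' l
  refine ⟨two_mul_arccos_cos_half h0.le h2.le, hd', hl', ?_⟩
  simp only [m', vd, wr, hvr, hd', hl']
  rw [show d * cos (θ / 2) / 2 = d / 2 * cos (θ / 2) by ring, add_sub_cancel_right,
    inv_smul_smul₀ hs.ne']

/-- Screw-parameter extraction is a left inverse of the screw-to-dual-quaternion
construction: for `0 < θ < 2π`, `‖l‖ = 1`, `l·m = 0`, building
`w_r = cos(θ/2)`, `v_r = sin(θ/2) l`, `w_d = −(d/2)sin(θ/2)`,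
`v_d = sin(θ/2) m + (d/2)cos(θ/2) l` and extracting
`θ′ = 2 arccos(w_r)`, `d′ = −2 w_d / ‖v_r‖`, `l′ = v_r / ‖v_r‖`,
`m′ = (v_d − l′ (d′ w_r / 2)) / ‖v_r‖` recovers `(θ, d, l, m)`. -/
theorem screw_roundtrip (θ d : ℝ) (l m : EuclideanSpace ℝ (Fin 3))
    (h0 : 0 < θ) (h2 : θ < 2 * π) (hl : ‖l‖ = 1) (hlm : (inner ℝ l m : ℝ) = 0) :
    let wr : ℝ := Real.cos (θ / 2)
    let vr : EuclideanSpace ℝ (Fin 3) := Real.sin (θ / 2) • l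
    let wd : ℝ := -(d / 2) * Real.sin (θ / 2)
    let vd : EuclideanSpace ℝ (Fin 3) :=
      Real.sin (θ / 2) • m + ((d / 2) * Real.cos (θ / 2)) • l
    let θ' : ℝ := 2 * Real.arccos wr
    let d' : ℝ := -2 * wd / ‖vr‖
    let l' : EuclideanSpace ℝ (Fin 3) := ‖vr‖⁻¹ • vr
    let m' : EuclideanSpace ℝ (Fin 3) := ‖vr‖⁻¹ • (vd - (d' * wr / 2) • l')
    θ' = θ ∧ d' = d ∧ l' = l ∧ m' = m :=
  screw_roundtrip_general θ d l m h0 h2 hl
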